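/- Let n ≥ 1, μ ∈ ℝⁿ, and Σ a positive definite symmetric real n×n matrix, and let ν = ν_{μ,Σ} be the corresponding Gaussian measure on ℝⁿ. With M(x) = −(1/2)Σ⁻¹ + (1/2)Σ⁻¹(x−μ)(x−μ)ᵀΣ⁻¹, Y(x) = Σ⁻¹(x−μ), and K = Σ⁻¹, for all indices a, b, c, d one has ∫ M(x)_{ab}·Y(x)_c·Y(x)_d dν(x) = (1/2)(K_{ac}K_{bd} + K_{ad}K_{bc}). (This is the Amari–Chentsov component C_{Σμμ} = Σ⁻¹⊗Σ⁻¹ of the multivariate Gaussian family, written in symmetrized component form.) -/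

import Mathlib

open MeasureTheory Matrix Real

/-- The Lebesgue density of the multivariate Gaussian distribution with mean `μ` and
covariance matrix `S` on `ℝⁿ`. -/
noncomputable def mvGaussDensity {n : ℕ} (μ : Fin n → ℝ) (S : Matrix (Fin n) (Fin n) ℝ)
    (x : Fin n → ℝ) : ℝ :=
  (2 * π) ^ (-(n : ℝ) / 2) * S.det ^ (-(1 : ℝ) / 2) *
    Real.exp (-(1 / 2) * ((x - μ) ⬝ᵥ (S⁻¹ *ᵥ (x - μ))))

/-- The multivariate Gaussian measure `ν_{μ,Σ}` on `ℝⁿ`, given by its Lebesgue density. -/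
noncomputable def mvGaussMeasure {n : ℕ} (μ : Fin n → ℝ) (S : Matrix (Fin n) (Fin n) ℝ) :
    Measure (Fin n → ℝ) :=
  volume.withDensity fun x => ENNReal.ofReal (mvGaussDensity μ S x)

/-- The score of the multivariate Gaussian log-likelihood with respect to the covariance
parameter: M(x) = −(1/2)Σ⁻¹ + (1/2)Σ⁻¹(x−μ)(x−μ)ᵀΣ⁻¹. -/
noncomputable def mvScoreSigma {n : ℕ} (μ : Fin n → ℝ) (S : Matrix (Fin n) (Fin n) ℝ)
    (x : Fin n → ℝ) : Matrix (Fin n) (Fin n) ℝ :=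
  (-(1 / 2) : ℝ) • S⁻¹ + ((1 / 2) : ℝ) • (S⁻¹ * Matrix.vecMulVec (x - μ) (x - μ) * S⁻¹)

/-!
Choose `B` with `B Bᵀ = Σ`. The substitution `x = μ + B u` turns `ν_{μ,Σ}` into the standard
Gaussian on `ℝⁿ` and `Y(x)` into `C u` with `C = Σ⁻¹ B`, so that `C Cᵀ = K`. Since
`M_{ab} = -(1/2) K_{ab} + (1/2) Y_a Y_b`, the integral equals
`-(1/2) K_{ab} E[Y_c Y_d] + (1/2) E[Y_a Y_b Y_c Y_d]`, and Isserlis' formula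
`E[Y_a Y_b Y_c Y_d] = K_{ab} K_{cd} + K_{ac} K_{bd} + K_{ad} K_{bc}` cancels the first term.
The standard Gaussian moments come from integration by parts against the density `φ`,
`∫ t^(p+1) φ = p ∫ t^(p-1) φ`, which for products of coordinates is Wick's recursion
`E[u_j ∏_{x ∈ s} u_x] = (count of j in s) · E[∏_{x ∈ s - {j}} u_x]`.
-/

lemma Multiset.prod_map_eq_prod_pow_count {ι M : Type*} [Fintype ι] [DecidableEq ι]
    [CommMonoid M] (s : Multiset ι) (f : ι → M) : (s.map f).prod = ∏ i, f i ^ s.count i := by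
  rw [Finset.prod_multiset_map_count]
  exact Finset.prod_subset (Finset.subset_univ _) fun i _ hi => by
    simp [Multiset.count_eq_zero.2 (by simpa using hi)]

lemma integral_eq_abs_det_smul_integral_add_mulVec {ι E : Type*} [Fintype ι]
    [DecidableEq ι] [NormedAddCommGroup E] [NormedSpace ℝ E] {B : Matrix ι ι ℝ}
    (hB : B.det ≠ 0) (μ : ι → ℝ) (g : (ι → ℝ) → E) :
    ∫ x, g x = |B.det| • ∫ u, g (μ + B *ᵥ u) := by
  have hinj : Function.Injective (toLin' B) :=
    mulVec_injective_iff_isUnit.mpr ((isUnit_iff_isUnit_det B).mpr hB.isUnit)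
  have hemb : MeasurableEmbedding (toLin' B) :=
    ((toLin' B).isClosedEmbedding_of_injective
      (LinearMap.ker_eq_bot.mpr hinj)).measurableEmbedding
  have hmap : ∫ u, g (μ + B *ᵥ u) = |B.det|⁻¹ • ∫ y, g (μ + y) :=
    calc ∫ u, g (μ + B *ᵥ u) = ∫ y, g (μ + y) ∂(Measure.map (toLin' B) volume) :=
          (hemb.integral_map fun y => g (μ + y)).symm
      _ = |B.det|⁻¹ • ∫ y, g (μ + y) := by
          rw [Real.map_matrix_volume_pi_eq_smul_volume_pi hB, integral_smul_measure,
            ENNReal.toReal_ofReal (abs_nonneg _), abs_inv]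
  rw [hmap, smul_smul, mul_inv_cancel₀ (abs_ne_zero.mpr hB), one_smul, integral_add_left_eq_self]

lemma sq_rpow_neg_one_div_two (x : ℝ) : (x ^ 2) ^ (-(1 : ℝ) / 2) = |x|⁻¹ := by
  rw [← sq_abs, ← Real.rpow_natCast, ← Real.rpow_mul (abs_nonneg x)]
  norm_num [Real.rpow_neg_one]

lemma rpow_neg_natCast_div_two {x : ℝ} (hx : 0 ≤ x) (n : ℕ) :
    x ^ (-(n : ℝ) / 2) = (√x)⁻¹ ^ n := by
  rw [Real.sqrt_eq_rpow, ← Real.rpow_neg hx, ← Real.rpow_natCast, ← Real.rpow_mul hx]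
  ring_nf

open scoped MatrixOrder in
lemma Matrix.PosSemidef.exists_mul_transpose_eq {ι : Type*} [Fintype ι] [DecidableEq ι]
    {S : Matrix ι ι ℝ} (hS : S.PosSemidef) : ∃ B : Matrix ι ι ℝ, B * Bᵀ = S := by
  refine ⟨CFC.sqrt S, ?_⟩
  have hsymm : (CFC.sqrt S)ᵀ = CFC.sqrt S := (CFC.sqrt_nonneg S).posSemidef.isHermitian
  rw [hsymm, CFC.sqrt_mul_sqrt_self S hS.nonneg]

lemma inv_mul_mul_transpose_inv_mul {ι R : Type*} [Fintype ι] [DecidableEq ι] [CommRing R]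
    {S B : Matrix ι ι R} (hSB : B * Bᵀ = S) (hS : S.IsSymm) (hdet : IsUnit S.det) :
    S⁻¹ * B * (S⁻¹ * B)ᵀ = S⁻¹ := by
  rw [transpose_mul, hS.inv.eq, Matrix.mul_assoc, ← Matrix.mul_assoc B, hSB,
    mul_nonsing_inv _ hdet, Matrix.mul_one]

namespace ProbabilityTheory

lemma gaussianPDFReal_zero_one (t : ℝ) :
    gaussianPDFReal 0 1 t = (√(2 * π))⁻¹ * exp (-(t ^ 2 / 2)) := by
  simp [gaussianPDFReal, neg_div]

lemma hasDerivAt_gaussianPDFReal_zero_one (t : ℝ) :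
    HasDerivAt (gaussianPDFReal 0 1) (-t * gaussianPDFReal 0 1 t) t := by
  have h : HasDerivAt (fun s : ℝ => -(s ^ 2 / 2)) (-t) t := by
    simpa using ((hasDerivAt_pow 2 t).div_const 2).fun_neg
  rw [funext gaussianPDFReal_zero_one]
  exact (h.exp.const_mul _).congr_deriv (by ring)

lemma integrable_pow_mul_gaussianPDFReal_zero_one (p : ℕ) :
    Integrable fun t : ℝ => t ^ p * gaussianPDFReal 0 1 t := by
  refine ((integrable_rpow_mul_exp_neg_mul_sq (b := 1 / 2) (by norm_num) (s := p)
    (by linarith [(Nat.cast_nonneg p : (0 : ℝ) ≤ p)])).const_mul (√(2 * π))⁻¹).congr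
    (.of_forall fun t => ?_)
  simp only [gaussianPDFReal_zero_one, Real.rpow_natCast]
  ring_nf

/-- At `p = 0` the truncated `p - 1` is harmless: the right-hand side is `0`. -/
lemma integral_pow_succ_mul_gaussianPDFReal_zero_one (p : ℕ) :
    ∫ t, t ^ (p + 1) * gaussianPDFReal 0 1 t
      = p * ∫ t, t ^ (p - 1) * gaussianPDFReal 0 1 t := by
  have hu'v : Integrable fun t : ℝ => p * t ^ (p - 1) * gaussianPDFReal 0 1 t := by
    simpa only [mul_assoc] using (integrable_pow_mul_gaussianPDFReal_zero_one (p - 1)).const_mul p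
  have huv' : Integrable fun t : ℝ => t ^ p * (-t * gaussianPDFReal 0 1 t) := by
    refine (integrable_pow_mul_gaussianPDFReal_zero_one (p + 1)).neg.congr (.of_forall fun t => ?_)
    simp only [Pi.neg_apply]
    ring
  have hibp := integral_mul_deriv_eq_deriv_mul_of_integrable
    (fun t _ => hasDerivAt_pow p t) (fun t _ => hasDerivAt_gaussianPDFReal_zero_one t)
    huv' hu'v (integrable_pow_mul_gaussianPDFReal_zero_one p)
  simp only [mul_assoc, integral_const_mul] at hibp
  rw [← neg_neg (_ * _), ← hibp, ← integral_neg]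
  congr 1 with t
  ring

section StdGaussianPDF

variable {ι : Type*} [Fintype ι]

noncomputable def stdGaussianPDF (u : ι → ℝ) : ℝ := ∏ i, gaussianPDFReal 0 1 (u i)

lemma prod_pow_mul_stdGaussianPDF (c : ι → ℕ) (u : ι → ℝ) :
    (∏ i, u i ^ c i) * stdGaussianPDF u = ∏ i, (u i ^ c i * gaussianPDFReal 0 1 (u i)) :=
  Finset.prod_mul_distrib.symm

lemma integrable_prod_pow_mul_stdGaussianPDF (c : ι → ℕ) :
    Integrable fun u : ι → ℝ => (∏ i, u i ^ c i) * stdGaussianPDF u := by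
  simp_rw [prod_pow_mul_stdGaussianPDF]
  exact Integrable.fintype_prod (f := fun i t => t ^ c i * gaussianPDFReal 0 1 t)
    fun i => integrable_pow_mul_gaussianPDFReal_zero_one (c i)

lemma integral_prod_pow_mul_stdGaussianPDF (c : ι → ℕ) :
    ∫ u : ι → ℝ, (∏ i, u i ^ c i) * stdGaussianPDF u
      = ∏ i, ∫ t, t ^ c i * gaussianPDFReal 0 1 t := by
  simp_rw [prod_pow_mul_stdGaussianPDF]
  exact integral_fintype_prod_eq_prod fun i t => t ^ c i * gaussianPDFReal 0 1 t

lemma integral_stdGaussianPDF : ∫ u : ι → ℝ, stdGaussianPDF u = 1 := by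
  simpa [integral_gaussianPDFReal_eq_one] using integral_prod_pow_mul_stdGaussianPDF (ι := ι) 0

lemma mulVec_mul_mulVec_mul_stdGaussianPDF (C : Matrix ι ι ℝ) (a b : ι) (u : ι → ℝ) :
    (C *ᵥ u) a * (C *ᵥ u) b * stdGaussianPDF u
      = ∑ k, ∑ j, C a j * C b k * (u j * u k * stdGaussianPDF u) := by
  simp only [mulVec, dotProduct, Finset.mul_sum, Finset.sum_mul]
  exact Finset.sum_congr rfl fun k _ => Finset.sum_congr rfl fun j _ => by ring

lemma mulVec_mul_four_mul_stdGaussianPDF (C : Matrix ι ι ℝ) (a b c d : ι) (u : ι → ℝ) :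
    (C *ᵥ u) a * (C *ᵥ u) b * (C *ᵥ u) c * (C *ᵥ u) d * stdGaussianPDF u
      = ∑ m, ∑ l, ∑ k, ∑ j,
          C a j * C b k * C c l * C d m * (u j * u k * u l * u m * stdGaussianPDF u) := by
  simp only [mulVec, dotProduct, Finset.mul_sum, Finset.sum_mul]
  exact Finset.sum_congr rfl fun m _ => Finset.sum_congr rfl fun l _ =>
    Finset.sum_congr rfl fun k _ => Finset.sum_congr rfl fun j _ => by ring

variable [DecidableEq ι]

lemma integrable_prod_map_mul_stdGaussianPDF (s : Multiset ι) :
    Integrable fun u : ι → ℝ => (s.map u).prod * stdGaussianPDF u := by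
  simp_rw [Multiset.prod_map_eq_prod_pow_count]
  exact integrable_prod_pow_mul_stdGaussianPDF _

lemma integral_mul_prod_map_mul_stdGaussianPDF (j : ι) (s : Multiset ι) :
    ∫ u : ι → ℝ, u j * (s.map u).prod * stdGaussianPDF u
      = s.count j * ∫ u : ι → ℝ, ((s.erase j).map u).prod * stdGaussianPDF u := by
  have hcons (u : ι → ℝ) : u j * (s.map u).prod = ((j ::ₘ s).map u).prod := by simp
  simp_rw [hcons, Multiset.prod_map_eq_prod_pow_count, integral_prod_pow_mul_stdGaussianPDF,
    ← Finset.mul_prod_erase _ _ (Finset.mem_univ j), ← mul_assoc]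
  congr 1
  · simpa [Multiset.count_erase_self] using
      integral_pow_succ_mul_gaussianPDFReal_zero_one (s.count j)
  · refine Finset.prod_congr rfl fun i hi => ?_
    have hij : i ≠ j := Finset.ne_of_mem_erase hi
    rw [Multiset.count_cons_of_ne hij, Multiset.count_erase_of_ne hij]

lemma integrable_mul_mul_stdGaussianPDF (j k : ι) :
    Integrable fun u : ι → ℝ => u j * u k * stdGaussianPDF u := by
  simpa using integrable_prod_map_mul_stdGaussianPDF {j, k}

lemma integrable_mul_mul_mul_mul_stdGaussianPDF (j k l m : ι) :
    Integrable fun u : ι → ℝ => u j * u k * u l * u m * stdGaussianPDF u := by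
  simpa [mul_assoc] using integrable_prod_map_mul_stdGaussianPDF {j, k, l, m}

lemma integral_mul_mul_stdGaussianPDF (j k : ι) :
    ∫ u : ι → ℝ, u j * u k * stdGaussianPDF u = if j = k then 1 else 0 := by
  have h := integral_mul_prod_map_mul_stdGaussianPDF j {k}
  split_ifs at h ⊢ with hjk
  · subst hjk
    simpa [integral_stdGaussianPDF] using h
  · simpa [hjk] using h

lemma integral_mul_mul_mul_mul_stdGaussianPDF (j k l m : ι) :
    ∫ u : ι → ℝ, u j * u k * u l * u m * stdGaussianPDF u
      = (if j = k then 1 else 0) * (if l = m then 1 else 0)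
        + (if j = l then 1 else 0) * (if k = m then 1 else 0)
        + (if j = m then 1 else 0) * (if k = l then 1 else 0) := by
  set E : Multiset ι → ℝ := fun s => ∫ u : ι → ℝ, (s.map u).prod * stdGaussianPDF u
    with hE
  have hE2 (x y : ι) : E {x, y} = if x = y then 1 else 0 := by
    simpa [hE] using integral_mul_mul_stdGaussianPDF x y
  have hwick : ∫ u : ι → ℝ, u j * u k * u l * u m * stdGaussianPDF u
      = ((k ::ₘ l ::ₘ m ::ₘ 0).count j : ℝ) * E ((k ::ₘ l ::ₘ m ::ₘ 0).erase j) := by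
    rw [← integral_mul_prod_map_mul_stdGaussianPDF]
    congr 1 with u
    simp only [Multiset.map_cons, Multiset.prod_cons, Multiset.map_zero, Multiset.prod_zero]
    ring
  have hsubst (x : ι) : (if j = x then E ((k ::ₘ l ::ₘ m ::ₘ 0).erase j) else 0)
      = if j = x then E ((k ::ₘ l ::ₘ m ::ₘ 0).erase x) else 0 := by
    split_ifs with h <;> simp [h]
  have herase_l : (k ::ₘ l ::ₘ m ::ₘ 0).erase l = {k, m} := by
    rw [Multiset.cons_swap, Multiset.erase_cons_head]
    rfl
  have herase_m : (k ::ₘ l ::ₘ m ::ₘ 0).erase m = {k, l} := by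
    rw [Multiset.cons_swap l, Multiset.cons_swap k, Multiset.erase_cons_head]
    rfl
  rw [hwick]
  simp only [Multiset.count_cons, Multiset.count_zero]
  push_cast
  simp only [zero_add, add_mul, ite_mul, one_mul, zero_mul]
  rw [hsubst k, hsubst l, hsubst m, Multiset.erase_cons_head, herase_l, herase_m]
  change _ + _ + (if j = k then E {l, m} else 0) = _
  rw [hE2, hE2, hE2]
  ring

variable (C : Matrix ι ι ℝ)

lemma integrable_mulVec_mul_mulVec_mul_stdGaussianPDF (a b : ι) :
    Integrable fun u : ι → ℝ => (C *ᵥ u) a * (C *ᵥ u) b * stdGaussianPDF u := by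
  simp_rw [mulVec_mul_mulVec_mul_stdGaussianPDF]
  exact integrable_finsetSum _ fun k _ => integrable_finsetSum _ fun j _ =>
    (integrable_mul_mul_stdGaussianPDF j k).const_mul _

lemma integrable_mulVec_mul_four_mul_stdGaussianPDF (a b c d : ι) :
    Integrable fun u : ι → ℝ =>
      (C *ᵥ u) a * (C *ᵥ u) b * (C *ᵥ u) c * (C *ᵥ u) d * stdGaussianPDF u := by
  simp_rw [mulVec_mul_four_mul_stdGaussianPDF]
  exact integrable_finsetSum _ fun m _ => integrable_finsetSum _ fun l _ =>
    integrable_finsetSum _ fun k _ => integrable_finsetSum _ fun j _ =>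
    (integrable_mul_mul_mul_mul_stdGaussianPDF j k l m).const_mul _

lemma integral_mulVec_mul_mulVec_mul_stdGaussianPDF (a b : ι) :
    ∫ u : ι → ℝ, (C *ᵥ u) a * (C *ᵥ u) b * stdGaussianPDF u = (C * Cᵀ) a b := by
  have hint (j k : ι) :
      Integrable fun u : ι → ℝ => C a j * C b k * (u j * u k * stdGaussianPDF u) :=
    (integrable_mul_mul_stdGaussianPDF j k).const_mul _
  simp_rw [mulVec_mul_mulVec_mul_stdGaussianPDF]
  rw [integral_finsetSum _ fun k _ => integrable_finsetSum _ fun j _ => hint j k]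
  simp_rw [integral_finsetSum _ fun j _ => hint j _, integral_const_mul,
    integral_mul_mul_stdGaussianPDF]
  simp [mul_apply]

lemma integral_mulVec_mul_four_mul_stdGaussianPDF (a b c d : ι) :
    ∫ u : ι → ℝ, (C *ᵥ u) a * (C *ᵥ u) b * (C *ᵥ u) c * (C *ᵥ u) d * stdGaussianPDF u
      = (C * Cᵀ) a b * (C * Cᵀ) c d + (C * Cᵀ) a c * (C * Cᵀ) b d
        + (C * Cᵀ) a d * (C * Cᵀ) b c := by
  have hint (j k l m : ι) : Integrable fun u : ι → ℝ =>
      C a j * C b k * C c l * C d m * (u j * u k * u l * u m * stdGaussianPDF u) :=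
    (integrable_mul_mul_mul_mul_stdGaussianPDF j k l m).const_mul _
  simp_rw [mulVec_mul_four_mul_stdGaussianPDF]
  rw [integral_finsetSum _ fun m _ => integrable_finsetSum _ fun l _ =>
    integrable_finsetSum _ fun k _ => integrable_finsetSum _ fun j _ => hint j k l m]
  simp_rw [integral_finsetSum _ fun l _ => integrable_finsetSum _ fun k _ =>
      integrable_finsetSum _ fun j _ => hint j k l _,
    integral_finsetSum _ fun k _ => integrable_finsetSum _ fun j _ => hint j k _ _,
    integral_finsetSum _ fun j _ => hint j _ _ _,
    integral_const_mul, integral_mul_mul_mul_mul_stdGaussianPDF]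
  simp [mul_apply, mul_add, Finset.sum_add_distrib, mul_ite, Finset.sum_ite_irrel,
    Finset.sum_mul_sum]
  rw [Finset.sum_comm (f := fun x y => C a y * C b y * C c x * C d x),
    Finset.sum_comm (f := fun x y => C a y * C b x * C c y * C d x)]
  simp only [mul_comm, mul_left_comm]

end StdGaussianPDF

end ProbabilityTheory

open ProbabilityTheory

section MvGauss

variable {n : ℕ} (μ : Fin n → ℝ) {S B : Matrix (Fin n) (Fin n) ℝ}

lemma abs_det_mul_mvGaussDensity_add_mulVec (hSB : B * Bᵀ = S) (hB : B.det ≠ 0)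
    (u : Fin n → ℝ) :
    |B.det| * mvGaussDensity μ S (μ + B *ᵥ u) = stdGaussianPDF u := by
  have hBt : IsUnit Bᵀ.det := by rw [det_transpose]; exact hB.isUnit
  have hquad : (B *ᵥ u) ⬝ᵥ (S⁻¹ *ᵥ (B *ᵥ u)) = ∑ i, u i ^ 2 := by
    rw [dotProduct_comm, dotProduct_mulVec, ← mulVec_transpose, mulVec_mulVec, ← hSB,
      Matrix.mul_inv_rev, ← Matrix.mul_assoc, mul_nonsing_inv _ hBt, Matrix.one_mul,
      mulVec_mulVec, nonsing_inv_mul _ hB.isUnit, one_mulVec]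
    simp [dotProduct, sq]
  have hdet : S.det = B.det ^ 2 := by rw [← hSB, det_mul, det_transpose, sq]
  simp only [mvGaussDensity, stdGaussianPDF, gaussianPDFReal_zero_one, Finset.prod_mul_distrib,
    Finset.prod_const, Finset.card_univ, Fintype.card_fin, ← Real.exp_sum, add_sub_cancel_left,
    hquad, hdet, sq_rpow_neg_one_div_two, rpow_neg_natCast_div_two Real.two_pi_pos.le]
  rw [Finset.mul_sum]
  field_simp

lemma integral_mvGaussMeasure (hSB : B * Bᵀ = S) (hB : B.det ≠ 0)
    (f : (Fin n → ℝ) → ℝ) :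
    ∫ x, f x ∂(mvGaussMeasure μ S) = ∫ u, f (μ + B *ᵥ u) * stdGaussianPDF u := by
  have hmeas : Measurable fun x => ENNReal.ofReal (mvGaussDensity μ S x) := by
    unfold mvGaussDensity
    fun_prop
  have hnonneg (x : Fin n → ℝ) : 0 ≤ mvGaussDensity μ S x := by
    have : 0 ≤ S.det := by rw [← hSB, det_mul, det_transpose]; exact mul_self_nonneg _
    unfold mvGaussDensity
    positivity
  rw [mvGaussMeasure, integral_withDensity_eq_integral_toReal_smul hmeas
    (.of_forall fun _ => ENNReal.ofReal_lt_top)]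
  simp only [ENNReal.toReal_ofReal (hnonneg _), smul_eq_mul]
  rw [integral_eq_abs_det_smul_integral_add_mulVec hB μ, smul_eq_mul, ← integral_const_mul]
  simp_rw [← mul_assoc, abs_det_mul_mvGaussDensity_add_mulVec μ hSB hB, mul_comm]

lemma mvScoreSigma_apply (hS : S.IsSymm) (x : Fin n → ℝ) (a b : Fin n) :
    mvScoreSigma μ S x a b
      = -(1 / 2) * S⁻¹ a b + 1 / 2 * ((S⁻¹ *ᵥ (x - μ)) a * (S⁻¹ *ᵥ (x - μ)) b) := by
  have hY : (x - μ) ᵥ* S⁻¹ = S⁻¹ *ᵥ (x - μ) := by rw [← mulVec_transpose, hS.inv.eq]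
  simp [mvScoreSigma, mul_vecMulVec, vecMulVec_mul, hY, vecMulVec_apply]

end MvGauss

theorem mvGaussian_AC_Sigma_mu_mu (n : ℕ) (μ : Fin n → ℝ)
    (S : Matrix (Fin n) (Fin n) ℝ) (hS : S.PosDef) (hSsymm : S.IsSymm) (a b c d : Fin n) :
    ∫ x, mvScoreSigma μ S x a b * (S⁻¹ *ᵥ (x - μ)) c * (S⁻¹ *ᵥ (x - μ)) d
        ∂(mvGaussMeasure μ S) =
      (1 / 2) * (S⁻¹ a c * S⁻¹ b d + S⁻¹ a d * S⁻¹ b c) := by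
  obtain ⟨B, hSB⟩ := hS.posSemidef.exists_mul_transpose_eq
  have hB : B.det ≠ 0 := fun h => hS.det_pos.ne' (by rw [← hSB, det_mul, h, zero_mul])
  set C := S⁻¹ * B with hC
  have hCC : C * Cᵀ = S⁻¹ :=
    inv_mul_mul_transpose_inv_mul hSB hSsymm (isUnit_iff_ne_zero.mpr hS.det_pos.ne')
  have hsplit (u : Fin n → ℝ) :
      (-(1 / 2) * S⁻¹ a b + 1 / 2 * ((C *ᵥ u) a * (C *ᵥ u) b)) * (C *ᵥ u) c * (C *ᵥ u) d
          * stdGaussianPDF u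
        = -(1 / 2) * S⁻¹ a b * ((C *ᵥ u) c * (C *ᵥ u) d * stdGaussianPDF u)
          + 1 / 2 * ((C *ᵥ u) a * (C *ᵥ u) b * (C *ᵥ u) c * (C *ᵥ u) d
            * stdGaussianPDF u) := by
    ring
  rw [integral_mvGaussMeasure μ hSB hB]
  simp_rw [mvScoreSigma_apply μ hSsymm, add_sub_cancel_left, mulVec_mulVec, ← hC, hsplit]
  rw [integral_add ((integrable_mulVec_mul_mulVec_mul_stdGaussianPDF C c d).const_mul _)
      ((integrable_mulVec_mul_four_mul_stdGaussianPDF C a b c d).const_mul _),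
    integral_const_mul, integral_const_mul, integral_mulVec_mul_mulVec_mul_stdGaussianPDF,
    integral_mulVec_mul_four_mul_stdGaussianPDF, hCC]
  ring
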